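/- On (ℂ²)^{⊗4}, let |ψ⁻⟩ = (|01⟩ − |10⟩)/√2 and |ψ⁺⟩ = (|01⟩ + |10⟩)/√2, and define H = |ψ⁻⟩⟨ψ⁻|^{(1,2)} ⊗ I^{(3,4)} + I^{(1)} ⊗ (|ψ⁻⟩⟨ψ⁻| + |ψ⁺⟩⟨ψ⁺|)^{(2,3)} ⊗ I^{(4)} + I^{(1,2)} ⊗ |ψ⁻⟩⟨ψ⁻|^{(3,4)}. Then ker(H) = span{|0000⟩, |1111⟩}, so dim ker(H) = 2. -/

import Mathlib

noncomputable section

/-- The singlet state `|ψ⁻⟩ = (|01⟩ − |10⟩)/√2` on two qubits. -/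
def psim : Fin 2 × Fin 2 → ℂ := fun p =>
  if p = (0, 1) then (1 : ℂ) / Real.sqrt 2
  else if p = (1, 0) then -((1 : ℂ) / Real.sqrt 2) else 0

/-- The triplet state `|ψ⁺⟩ = (|01⟩ + |10⟩)/√2` on two qubits. -/
def psip : Fin 2 × Fin 2 → ℂ := fun p =>
  if p = (0, 1) then (1 : ℂ) / Real.sqrt 2
  else if p = (1, 0) then (1 : ℂ) / Real.sqrt 2 else 0

/-- The Hamiltonian `H = |ψ⁻⟩⟨ψ⁻|^{(1,2)} ⊗ I + I ⊗ (|ψ⁻⟩⟨ψ⁻| + |ψ⁺⟩⟨ψ⁺|)^{(2,3)} ⊗ I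
+ I ⊗ |ψ⁻⟩⟨ψ⁻|^{(3,4)}` on four qubits, as a matrix. -/
def Ham : Matrix (Fin 2 × Fin 2 × Fin 2 × Fin 2) (Fin 2 × Fin 2 × Fin 2 × Fin 2) ℂ :=
  fun p q =>
    psim (p.1, p.2.1) * (starRingEnd ℂ) (psim (q.1, q.2.1)) *
        (if p.2.2.1 = q.2.2.1 then 1 else 0) * (if p.2.2.2 = q.2.2.2 then 1 else 0)
      + (if p.1 = q.1 then 1 else 0) *
          (psim (p.2.1, p.2.2.1) * (starRingEnd ℂ) (psim (q.2.1, q.2.2.1))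
            + psip (p.2.1, p.2.2.1) * (starRingEnd ℂ) (psip (q.2.1, q.2.2.1))) *
          (if p.2.2.2 = q.2.2.2 then 1 else 0)
      + (if p.1 = q.1 then 1 else 0) * (if p.2.1 = q.2.1 then 1 else 0) *
          (psim (p.2.2.1, p.2.2.2) * (starRingEnd ℂ) (psim (q.2.2.1, q.2.2.2)))

/-- The basis state `|0000⟩`. -/
def e0000 : Fin 2 × Fin 2 × Fin 2 × Fin 2 → ℂ := fun p => if p = (0, 0, 0, 0) then 1 else 0

/-- The basis state `|1111⟩`. -/
def e1111 : Fin 2 × Fin 2 × Fin 2 × Fin 2 → ℂ := fun p => if p = (1, 1, 1, 1) then 1 else 0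

/-!
Every term of `H` is a Gram matrix `Bᴴ B` of a bra `B = ⟨φ|` acting on two neighbouring qubits,
so `H` is a sum of positive semidefinite matrices and `ker H` is the intersection of the kernels
of the bras. These say that `v` is symmetric under swapping qubits 1,2 and under swapping
qubits 3,4, and that `v` vanishes on basis states whose qubits 2,3 differ. A non-constant basis
state either has distinct qubits 2,3 or is moved by one of the swaps to one that has, so only
`|0000⟩` and `|1111⟩` survive.
-/

open Matrix
open scoped ComplexOrder

theorem Matrix.PosSemidef.add_mulVec_eq_zero_iff {𝕜 n : Type*} [RCLike 𝕜] [Fintype n]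
    {A B : Matrix n n 𝕜} (hA : A.PosSemidef) (hB : B.PosSemidef) (v : n → 𝕜) :
    (A + B) *ᵥ v = 0 ↔ A *ᵥ v = 0 ∧ B *ᵥ v = 0 := by
  rw [← hA.dotProduct_mulVec_zero_iff, ← hB.dotProduct_mulVec_zero_iff,
    ← (hA.add hB).dotProduct_mulVec_zero_iff, add_mulVec, dotProduct_add]
  exact add_eq_zero_iff_of_nonneg (hA.dotProduct_mulVec_nonneg v) (hB.dotProduct_mulVec_nonneg v)

abbrev FourQubits := Fin 2 × Fin 2 × Fin 2 × Fin 2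

/-- `braLeft φ`, `braMid φ`, `braRight φ` are `⟨φ|` applied to qubits (1,2), (2,3), (3,4);
their rows are indexed by the two remaining qubits, in order. -/
def braLeft (φ : Fin 2 × Fin 2 → ℂ) : Matrix (Fin 2 × Fin 2) FourQubits ℂ := fun r q =>
  star (φ (q.1, q.2.1)) * (if q.2.2.1 = r.1 then 1 else 0) * (if q.2.2.2 = r.2 then 1 else 0)

def braMid (φ : Fin 2 × Fin 2 → ℂ) : Matrix (Fin 2 × Fin 2) FourQubits ℂ := fun r q =>
  (if q.1 = r.1 then 1 else 0) * star (φ (q.2.1, q.2.2.1)) * (if q.2.2.2 = r.2 then 1 else 0)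

def braRight (φ : Fin 2 × Fin 2 → ℂ) : Matrix (Fin 2 × Fin 2) FourQubits ℂ := fun r q =>
  (if q.1 = r.1 then 1 else 0) * (if q.2.1 = r.2 then 1 else 0) * star (φ (q.2.2.1, q.2.2.2))

theorem Ham_eq : Ham = (braLeft psim)ᴴ * braLeft psim
    + ((braMid psim)ᴴ * braMid psim + (braMid psip)ᴴ * braMid psip)
    + (braRight psim)ᴴ * braRight psim := by
  ext p q
  simp [Ham, braLeft, braMid, braRight, mul_apply, Fintype.sum_prod_type, mul_ite, ite_mul,
    Finset.sum_ite_eq, apply_ite (starRingEnd ℂ)]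
  split_ifs <;> ring

section Bras
variable (φ : Fin 2 × Fin 2 → ℂ) (v : FourQubits → ℂ)

theorem braLeft_mulVec_apply (c d : Fin 2) :
    (braLeft φ *ᵥ v) (c, d) = ∑ x : Fin 2 × Fin 2, star (φ x) * v (x.1, x.2, c, d) := by
  simp [braLeft, mulVec, dotProduct, Fintype.sum_prod_type, mul_ite, ite_mul, Finset.sum_ite_eq']

theorem braMid_mulVec_apply (a d : Fin 2) :
    (braMid φ *ᵥ v) (a, d) = ∑ x : Fin 2 × Fin 2, star (φ x) * v (a, x.1, x.2, d) := by
  simp [braMid, mulVec, dotProduct, Fintype.sum_prod_type, mul_ite, ite_mul, Finset.sum_ite_eq']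

theorem braRight_mulVec_apply (a b : Fin 2) :
    (braRight φ *ᵥ v) (a, b) = ∑ x : Fin 2 × Fin 2, star (φ x) * v (a, b, x.1, x.2) := by
  simp [braRight, mulVec, dotProduct, Fintype.sum_prod_type, mul_ite, ite_mul, Finset.sum_ite_eq']

end Bras

theorem sum_star_psim_mul (w : Fin 2 × Fin 2 → ℂ) :
    ∑ x, star (psim x) * w x = (w (0, 1) - w (1, 0)) / Real.sqrt 2 := by
  simp [psim, Fintype.sum_prod_type]
  ring

theorem sum_star_psip_mul (w : Fin 2 × Fin 2 → ℂ) :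
    ∑ x, star (psip x) * w x = (w (0, 1) + w (1, 0)) / Real.sqrt 2 := by
  simp [psip, Fintype.sum_prod_type]
  ring

theorem forall_fin_two_comm_iff {α : Type*} (f : Fin 2 → Fin 2 → α) :
    (∀ a b, f a b = f b a) ↔ f 0 1 = f 1 0 := by
  simp [Fin.forall_fin_two, eq_comm]

theorem ofReal_sqrt_two_ne_zero : (Real.sqrt 2 : ℂ) ≠ 0 := by
  exact_mod_cast (Real.sqrt_pos.2 two_pos).ne'

theorem braLeft_psim_mulVec_eq_zero_iff (v : FourQubits → ℂ) :
    braLeft psim *ᵥ v = 0 ↔ ∀ a b c d, v (a, b, c, d) = v (b, a, c, d) := by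
  simp only [funext_iff, Prod.forall, braLeft_mulVec_apply, sum_star_psim_mul, Pi.zero_apply,
    div_eq_zero_iff, sub_eq_zero, ofReal_sqrt_two_ne_zero, or_false]
  exact ⟨fun h a b c d => (forall_fin_two_comm_iff (fun a b => v (a, b, c, d))).2 (h c d) a b,
    fun h c d => h 0 1 c d⟩

theorem braRight_psim_mulVec_eq_zero_iff (v : FourQubits → ℂ) :
    braRight psim *ᵥ v = 0 ↔ ∀ a b c d, v (a, b, c, d) = v (a, b, d, c) := by
  simp only [funext_iff, Prod.forall, braRight_mulVec_apply, sum_star_psim_mul, Pi.zero_apply,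
    div_eq_zero_iff, sub_eq_zero, ofReal_sqrt_two_ne_zero, or_false]
  exact ⟨fun h a b c d => (forall_fin_two_comm_iff (fun c d => v (a, b, c, d))).2 (h a b) c d,
    fun h a b => h a b 0 1⟩

theorem braMid_mulVec_eq_zero_iff (v : FourQubits → ℂ) :
    braMid psim *ᵥ v = 0 ∧ braMid psip *ᵥ v = 0 ↔ ∀ a b c d, b ≠ c → v (a, b, c, d) = 0 := by
  simp only [funext_iff, Prod.forall, braMid_mulVec_apply, sum_star_psim_mul, sum_star_psip_mul,
    Pi.zero_apply, div_eq_zero_iff, ofReal_sqrt_two_ne_zero, or_false, ← forall_and]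
  have hsum (x y : ℂ) : x - y = 0 ∧ x + y = 0 ↔ x = 0 ∧ y = 0 := by
    constructor
    · rintro ⟨h₁, h₂⟩
      exact ⟨by linear_combination (h₁ + h₂) / 2, by linear_combination (h₂ - h₁) / 2⟩
    · rintro ⟨rfl, rfl⟩
      simp
  simp only [hsum]
  constructor
  · intro h a b c d hbc
    fin_cases b <;> fin_cases c
    exacts [absurd rfl hbc, (h a d).1, (h a d).2, absurd rfl hbc]
  · intro h a d
    exact ⟨h a 0 1 d (by decide), h a 1 0 d (by decide)⟩

theorem Ham_mulVec_eq_zero_iff (v : FourQubits → ℂ) :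
    Ham *ᵥ v = 0 ↔ (∀ a b c d, v (a, b, c, d) = v (b, a, c, d)) ∧
      (∀ a b c d, b ≠ c → v (a, b, c, d) = 0) ∧ (∀ a b c d, v (a, b, c, d) = v (a, b, d, c)) := by
  have gram {m : Type} [Fintype m] (B : Matrix m FourQubits ℂ) := posSemidef_conjTranspose_mul_self B
  rw [Ham_eq, PosSemidef.add_mulVec_eq_zero_iff ((gram _).add ((gram _).add (gram _))) (gram _),
    PosSemidef.add_mulVec_eq_zero_iff (gram _) ((gram _).add (gram _)),
    PosSemidef.add_mulVec_eq_zero_iff (gram _) (gram _)]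
  simp only [conjTranspose_mul_self_mulVec_eq_zero, braLeft_psim_mulVec_eq_zero_iff,
    braMid_mulVec_eq_zero_iff, braRight_psim_mulVec_eq_zero_iff, and_assoc]

theorem apply_eq_zero_of_not_constant {ι α : Type*} [Zero α] {v : ι × ι × ι × ι → α}
    (h₁₂ : ∀ a b c d, v (a, b, c, d) = v (b, a, c, d))
    (h₂₃ : ∀ a b c d, b ≠ c → v (a, b, c, d) = 0)
    (h₃₄ : ∀ a b c d, v (a, b, c, d) = v (a, b, d, c))
    {a b c d : ι} (h : ¬(a = b ∧ b = c ∧ c = d)) : v (a, b, c, d) = 0 := by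
  by_cases hbc : b = c
  · subst hbc
    by_cases hab : a = b
    · subst hab
      rw [h₃₄]
      exact h₂₃ _ _ _ _ fun had => h ⟨rfl, rfl, had⟩
    · rw [h₁₂]
      exact h₂₃ _ _ _ _ hab
  · exact h₂₃ _ _ _ _ hbc

theorem eq_smul_e0000_add_smul_e1111 {v : FourQubits → ℂ}
    (hv : ∀ a b c d, ¬(a = b ∧ b = c ∧ c = d) → v (a, b, c, d) = 0) :
    v = v (0, 0, 0, 0) • e0000 + v (1, 1, 1, 1) • e1111 := by
  funext ⟨a, b, c, d⟩
  fin_cases a <;> fin_cases b <;> fin_cases c <;> fin_cases d <;> simp [e0000, e1111, hv]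

theorem Ham_mulVec_constant_basis (i : Fin 2) :
    Ham *ᵥ (fun p => if p = (i, i, i, i) then 1 else 0) = 0 := by
  rw [Ham_mulVec_eq_zero_iff]
  refine ⟨?_, ?_, ?_⟩ <;> intros <;> simp [Prod.ext_iff] <;> grind

theorem linearIndependent_e0000_e1111 : LinearIndependent ℂ ![e0000, e1111] := by
  rw [LinearIndependent.pair_iff]
  intro s t hst
  simpa [e0000, e1111] using And.intro (congrFun hst (0, 0, 0, 0)) (congrFun hst (1, 1, 1, 1))

/-- `ker H = span{|0000⟩, |1111⟩}`, so `dim ker H = 2`. -/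
theorem stmt_15 :
    LinearMap.ker Ham.mulVecLin = Submodule.span ℂ {e0000, e1111} ∧
      Module.finrank ℂ ↥(LinearMap.ker Ham.mulVecLin) = 2 := by
  have hker : LinearMap.ker Ham.mulVecLin = Submodule.span ℂ {e0000, e1111} := by
    refine le_antisymm (fun v hv => ?_) (Submodule.span_le.2 ?_)
    · obtain ⟨h₁₂, h₂₃, h₃₄⟩ := (Ham_mulVec_eq_zero_iff v).1 hv
      exact Submodule.mem_span_pair.2 ⟨_, _, (eq_smul_e0000_add_smul_e1111
        fun a b c d => apply_eq_zero_of_not_constant h₁₂ h₂₃ h₃₄).symm⟩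
    · rintro _ (rfl | rfl)
      exacts [Ham_mulVec_constant_basis 0, Ham_mulVec_constant_basis 1]
  refine ⟨hker, ?_⟩
  rw [hker, ← Matrix.range_cons_cons_empty e0000 e1111 ![],
    finrank_span_eq_card linearIndependent_e0000_e1111, Fintype.card_fin]

end
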